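/- arXiv:2605.17155 — 2 statements merged into one kernel-verified Lean document; each statement's English description precedes it below -/
import Mathlib

section
/- Let B be a Banach space and f : ℕ → B be Bohr almost periodic. For every η > 0 there exists L = L(f, η) such that for every h ≥ 0 there is r ∈ {0, …, L} with sup_{m≥0} ‖(f(m+h) − f(h)) − (f(m+r) − f(r))‖ < η. -/
/-! For `h > L` pick an `η/2`-translation number `τ ∈ [h - L, h]` and put `r = h - τ`: shifting both
`f (m + r)` and `f r` by `τ` moves each by less than `η/2`. For `h ≤ L` take `r = h`. -/

def BohrAP {B : Type*} [NormedAddCommGroup B] (f : ℕ → B) : Prop :=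
  ∀ ε > (0 : ℝ), ∃ L : ℕ, ∀ a : ℕ, ∃ τ : ℕ,
    1 ≤ τ ∧ a + 1 ≤ τ ∧ τ ≤ a + L ∧ ∀ n, ‖f (n + τ) - f n‖ < ε

lemma norm_increment_add_sub_increment_lt {M B : Type*} [AddSemigroup M]
    [SeminormedAddCommGroup B] {f : M → B} {τ : M} {ε : ℝ} (hτ : ∀ n, ‖f (n + τ) - f n‖ < ε)
    (m r : M) : ‖(f (m + (r + τ)) - f (r + τ)) - (f (m + r) - f r)‖ < ε + ε := by
  calc ‖(f (m + (r + τ)) - f (r + τ)) - (f (m + r) - f r)‖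
      = ‖(f (m + r + τ) - f (m + r)) - (f (r + τ) - f r)‖ := by
        rw [add_assoc]; congr 1; abel
    _ ≤ ‖f (m + r + τ) - f (m + r)‖ + ‖f (r + τ) - f r‖ := norm_sub_le _ _
    _ < ε + ε := add_lt_add (hτ _) (hτ _)

theorem stmt_4 {B : Type*} [NormedAddCommGroup B] (f : ℕ → B) (hf : BohrAP f) :
    ∀ η > (0 : ℝ), ∃ L : ℕ, ∀ h : ℕ, ∃ r : ℕ, r ≤ L ∧
      ∀ m : ℕ, ‖(f (m + h) - f h) - (f (m + r) - f r)‖ < η := by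
  intro η hη
  obtain ⟨L, hL⟩ := hf (η / 2) (half_pos hη)
  refine ⟨L, fun h => ?_⟩
  rcases le_or_gt h L with hh | hh
  · exact ⟨h, hh, fun m => by simpa using hη⟩
  obtain ⟨τ, -, hτ_lower, hτ_upper, hτ⟩ := hL (h - L)
  obtain ⟨r, rfl⟩ : ∃ r, h = r + τ := ⟨h - τ, by omega⟩
  refine ⟨r, by omega, fun m => ?_⟩
  simpa using norm_increment_add_sub_increment_lt hτ m r
end

section
/- Let S be a measurable space, A ⊆ S measurable, and T, S_c : S → S measurable maps. Let X be an S-valued random element with T X equal in distribution to S_c X. Assume ℙ(X ∈ A) > 0, A ⊆ T⁻¹(A), and S_c⁻¹(A) = A. Then under the conditional probability ℚ = ℙ(· | X ∈ A), T X is equal in distribution to S_c X; that is, for every bounded measurable F : S → ℝ, E[F(T X) 1_{X∈A}] = E[F(S_c X) 1_{X∈A}]. -/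
/-! The hypotheses `A ⊆ T⁻¹ A` and `ℙ(T X ∈ A) = ℙ(S_c X ∈ A) = ℙ(X ∈ A)` force the events
`{X ∈ A}` and `{T X ∈ A}` to agree up to a null set, while `{S_c X ∈ A} = {X ∈ A}` exactly.
Both sides are therefore integrals of `F` over `A` against the laws of `T X` and `S_c X`,
which coincide. -/

open MeasureTheory

section

variable {Ω S E : Type*} [MeasurableSpace Ω] [MeasurableSpace S]
  [NormedAddCommGroup E] [NormedSpace ℝ E] {μ : Measure Ω} {f g : Ω → S} {A : Set S}

theorem measure_preimage_eq_of_map_eq (hf : AEMeasurable f μ) (hg : AEMeasurable g μ)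
    (hfg : μ.map f = μ.map g) (hA : MeasurableSet A) :
    μ (f ⁻¹' A) = μ (g ⁻¹' A) := by
  rw [← Measure.map_apply_of_aemeasurable hf hA, hfg, Measure.map_apply_of_aemeasurable hg hA]

theorem setIntegral_comp_preimage_eq_of_map_eq (hf : AEMeasurable f μ) (hg : AEMeasurable g μ)
    (hfg : μ.map f = μ.map g) (hA : MeasurableSet A) {F : S → E}
    (hF : AEStronglyMeasurable F (μ.map f)) :
    ∫ ω in f ⁻¹' A, F (f ω) ∂μ = ∫ ω in g ⁻¹' A, F (g ω) ∂μ := by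
  rw [← setIntegral_map hA hF hf, hfg, setIntegral_map hA (hfg ▸ hF) hg]

end

theorem stmt_8_general {Ω S : Type*} [MeasurableSpace Ω] [MeasurableSpace S]
    (ℙ : Measure Ω) [IsProbabilityMeasure ℙ]
    (A : Set S) (hA : MeasurableSet A)
    (T Sc : S → S) (hT : Measurable T) (hSc : Measurable Sc)
    (X : Ω → S) (hX : Measurable X)
    (hdist : Measure.map (fun ω => T (X ω)) ℙ = Measure.map (fun ω => Sc (X ω)) ℙ)
    (hTA : A ⊆ T ⁻¹' A) (hScA : Sc ⁻¹' A = A) :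
    ∀ F : S → ℝ, Measurable F → (∃ C : ℝ, ∀ s, |F s| ≤ C) →
      ∫ ω in X ⁻¹' A, F (T (X ω)) ∂ℙ = ∫ ω in X ⁻¹' A, F (Sc (X ω)) ∂ℙ := by
  intro F hF _
  have hTX : AEMeasurable (T ∘ X) ℙ := (hT.comp hX).aemeasurable
  have hScX : AEMeasurable (Sc ∘ X) ℙ := (hSc.comp hX).aemeasurable
  have hScX_preimage : (Sc ∘ X) ⁻¹' A = X ⁻¹' A := by rw [Set.preimage_comp, hScA]
  have hTX_measure : ℙ ((T ∘ X) ⁻¹' A) = ℙ (X ⁻¹' A) := by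
    rw [measure_preimage_eq_of_map_eq hTX hScX hdist hA, hScX_preimage]
  have hTX_preimage : X ⁻¹' A =ᵐ[ℙ] (T ∘ X) ⁻¹' A :=
    ae_eq_of_subset_of_measure_ge (Set.preimage_mono hTA) hTX_measure.le
      (hX hA).nullMeasurableSet (measure_ne_top _ _)
  calc ∫ ω in X ⁻¹' A, F (T (X ω)) ∂ℙ
      = ∫ ω in (T ∘ X) ⁻¹' A, F ((T ∘ X) ω) ∂ℙ := setIntegral_congr_set hTX_preimage
    _ = ∫ ω in (Sc ∘ X) ⁻¹' A, F ((Sc ∘ X) ω) ∂ℙ :=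
        setIntegral_comp_preimage_eq_of_map_eq hTX hScX hdist hA hF.aestronglyMeasurable
    _ = ∫ ω in X ⁻¹' A, F (Sc (X ω)) ∂ℙ := by rw [hScX_preimage]; rfl

theorem stmt_8 {Ω S : Type*} [MeasurableSpace Ω] [MeasurableSpace S]
    (ℙ : Measure Ω) [IsProbabilityMeasure ℙ]
    (A : Set S) (hA : MeasurableSet A)
    (T Sc : S → S) (hT : Measurable T) (hSc : Measurable Sc)
    (X : Ω → S) (hX : Measurable X)
    (hdist : Measure.map (fun ω => T (X ω)) ℙ = Measure.map (fun ω => Sc (X ω)) ℙ)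
    (hpos : 0 < ℙ (X ⁻¹' A))
    (hTA : A ⊆ T ⁻¹' A) (hScA : Sc ⁻¹' A = A) :
    ∀ F : S → ℝ, Measurable F → (∃ C : ℝ, ∀ s, |F s| ≤ C) →
      ∫ ω in X ⁻¹' A, F (T (X ω)) ∂ℙ = ∫ ω in X ⁻¹' A, F (Sc (X ω)) ∂ℙ :=
  stmt_8_general ℙ A hA T Sc hT hSc X hX hdist hTA hScA
end
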